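/- arXiv:2602.18917 — 2 statements merged into one kernel-verified Lean document; each statement's English description precedes it below -/
import Mathlib

section
/- For smooth functions ρ : 𝕋^d → (0,∞) and u : 𝕋^d → ℝ^d, and U smooth on (0,∞) with U''(ρ)ρ = P'(ρ), one has ∫ [ρ (u⊗u) : ∇u − u · P'(ρ)∇ρ + ρ u · ∇(−|u|²/2 + U'(ρ))] dx = 0. -/
open MeasureTheory

/-- Conservativity identity for the barotropic Euler system on the torus
(realized as ℤ^d-periodic functions integrated over the unit cube):
∫ [ρ(u⊗u):∇u − u·P'(ρ)∇ρ + ρu·∇(−|u|²/2 + U'(ρ))] dx = 0. -/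
theorem stmt_14 (d : ℕ) (u : (Fin d → ℝ) → (Fin d → ℝ)) (ρ : (Fin d → ℝ) → ℝ)
    (U' U'' P' : ℝ → ℝ)
    (hu : ContDiff ℝ (⊤ : ℕ∞) u) (hρ : ContDiff ℝ (⊤ : ℕ∞) ρ) (hρpos : ∀ x, 0 < ρ x)
    (huper : ∀ x i, u (x + Pi.single i 1) = u x)
    (hρper : ∀ x i, ρ (x + Pi.single i 1) = ρ x)
    (hU'smooth : ContDiffOn ℝ (⊤ : ℕ∞) U' (Set.Ioi 0))
    (hU'deriv : ∀ y > (0:ℝ), HasDerivAt U' (U'' y) y)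
    (hPU : ∀ y > (0:ℝ), P' y = U'' y * y) :
    (∫ x in Set.univ.pi fun _ : Fin d => Set.Icc (0:ℝ) 1,
      (ρ x * ∑ i, ∑ j, u x i * u x j * fderiv ℝ u x (Pi.single j 1) i
        - ∑ i, u x i * P' (ρ x) * fderiv ℝ ρ x (Pi.single i 1)
        + ρ x * ∑ i, u x i *
            fderiv ℝ (fun y => -(∑ k, u y k ^ 2) / 2 + U' (ρ y)) x (Pi.single i 1))) = 0 := by
  have h0 : ∀ x : Fin d → ℝ,
      (ρ x * ∑ i, ∑ j, u x i * u x j * fderiv ℝ u x (Pi.single j 1) i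
        - ∑ i, u x i * P' (ρ x) * fderiv ℝ ρ x (Pi.single i 1)
        + ρ x * ∑ i, u x i *
            fderiv ℝ (fun y => -(∑ k, u y k ^ 2) / 2 + U' (ρ y)) x (Pi.single i 1)) = 0 := by
    intro x
    have hud : DifferentiableAt ℝ u x := (hu.differentiable (by simp)).differentiableAt
    have hρd : DifferentiableAt ℝ ρ x := (hρ.differentiable (by simp)).differentiableAt
    set Du := fderiv ℝ u x with hDu
    set Dρ := fderiv ℝ ρ x with hDρ
    have hcomp : ∀ k : Fin d, HasFDerivAt (fun y => u y k)
        ((ContinuousLinearMap.proj k : (Fin d → ℝ) →L[ℝ] ℝ).comp Du) x := fun k => by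
      exact
        HasFDerivAt.comp x (ContinuousLinearMap.proj k).hasFDerivAt hud.hasFDerivAt
    have hS : HasFDerivAt (fun y => ∑ k, u y k ^ 2)
        (∑ k, ((u x k) • ((ContinuousLinearMap.proj k : (Fin d → ℝ) →L[ℝ] ℝ).comp Du)
          + (u x k) • ((ContinuousLinearMap.proj k : (Fin d → ℝ) →L[ℝ] ℝ).comp Du))) x := by
      apply HasFDerivAt.fun_sum
      intro k _
      have := (hcomp k).fun_mul (hcomp k)
      simpa [sq] using this
    have h1 : HasFDerivAt (fun y => -(∑ k, u y k ^ 2) / 2)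
        ((-(1/2) : ℝ) • (∑ k, ((u x k) • ((ContinuousLinearMap.proj k : (Fin d → ℝ) →L[ℝ] ℝ).comp Du)
          + (u x k) • ((ContinuousLinearMap.proj k : (Fin d → ℝ) →L[ℝ] ℝ).comp Du)))) x := by
      have := hS.fun_const_smul (-(1/2) : ℝ)
      convert this using 2 with y
      iterate 5 rfl
      simp [smul_eq_mul]
      ring
    have hU'x : HasDerivAt U' (U'' (ρ x)) (ρ x) := hU'deriv _ (hρpos x)
    have h2 : HasFDerivAt (fun y => U' (ρ y)) ((U'' (ρ x)) • Dρ) x :=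
      hU'x.comp_hasFDerivAt x hρd.hasFDerivAt
    have hF := h1.fun_add h2
    rw [hF.fderiv]
    simp only [ContinuousLinearMap.add_apply, ContinuousLinearMap.coe_smul',
      Pi.smul_apply, ContinuousLinearMap.sum_apply, ContinuousLinearMap.coe_comp',
      Function.comp_apply, ContinuousLinearMap.proj_apply, smul_eq_mul,
      Finset.sum_apply]
    rw [hPU _ (hρpos x)]
    have hswap : ∑ i, ∑ j, u x i * u x j * Du (Pi.single j 1) i
        = ∑ i, u x i * ∑ k, u x k * Du (Pi.single i 1) k := by
      rw [Finset.sum_comm]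
      refine Finset.sum_congr rfl fun i _ => ?_
      rw [Finset.mul_sum]
      exact Finset.sum_congr rfl fun k _ => by ring
    rw [hswap]
    have hterm : ∀ i : Fin d,
        u x i * ((-(1/2) : ℝ) * (∑ k, (u x k * Du (Pi.single i 1) k + u x k * Du (Pi.single i 1) k))
          + U'' (ρ x) * Dρ (Pi.single i 1))
        = -(u x i * ∑ k, u x k * Du (Pi.single i 1) k)
          + U'' (ρ x) * (u x i * Dρ (Pi.single i 1)) := by
      intro i
      have : (∑ k, (u x k * Du (Pi.single i 1) k + u x k * Du (Pi.single i 1) k))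
          = 2 * ∑ k, u x k * Du (Pi.single i 1) k := by
        rw [Finset.mul_sum]
        exact Finset.sum_congr rfl fun k _ => by ring
      rw [this]
      ring
    simp only [hterm]
    rw [Finset.sum_add_distrib, Finset.sum_neg_distrib, ← Finset.mul_sum]
    have hB : ∑ i, u x i * (U'' (ρ x) * ρ x) * Dρ (Pi.single i 1)
        = (U'' (ρ x) * ρ x) * ∑ i, u x i * Dρ (Pi.single i 1) := by
      rw [Finset.mul_sum]
      exact Finset.sum_congr rfl fun i _ => by ring
    rw [hB]
    ring
  calc (∫ x in Set.univ.pi fun _ : Fin d => Set.Icc (0:ℝ) 1,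
      (ρ x * ∑ i, ∑ j, u x i * u x j * fderiv ℝ u x (Pi.single j 1) i
        - ∑ i, u x i * P' (ρ x) * fderiv ℝ ρ x (Pi.single i 1)
        + ρ x * ∑ i, u x i *
            fderiv ℝ (fun y => -(∑ k, u y k ^ 2) / 2 + U' (ρ y)) x (Pi.single i 1)))
      = ∫ _x in Set.univ.pi fun _ : Fin d => Set.Icc (0:ℝ) 1, (0:ℝ) := by
        exact integral_congr_ae (Filter.Eventually.of_forall fun x => h0 x)
    _ = 0 := by simp
end

section
/- For smooth functions u, λ : 𝕋^d → ℝ^d, w : 𝕋^d → ℝ and ρ : 𝕋^d → (0,∞) satisfying the constraint ∇(ρw) = ρλ, the integral ∫ [−ρ (λ⊗u):∇λ + ρ (λ⊗λ):∇u + ∇λ : ρw (∇u)ᵀ + ∇λ : (∇(ρw) ⊗ u) − ∇u : (∇(ρw) ⊗ λ) − ∇u : ρw (∇λ)ᵀ] dx equals 0. -/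
open MeasureTheory

/-- The integral I₂ in the Euler–Korteweg conservativity proof vanishes:
∫ [−ρ(λ⊗u):∇λ + ρ(λ⊗λ):∇u + ∇λ:ρw(∇u)ᵀ + ∇λ:(∇(ρw)⊗u) − ∇u:(∇(ρw)⊗λ)
 − ∇u:ρw(∇λ)ᵀ] dx = 0, under the constraint ∇(ρw) = ρλ, on the torus. -/
theorem stmt_15 (d : ℕ) (u lam : (Fin d → ℝ) → (Fin d → ℝ))
    (w ρ : (Fin d → ℝ) → ℝ)
    (hu : ContDiff ℝ (⊤ : ℕ∞) u) (hlam : ContDiff ℝ (⊤ : ℕ∞) lam)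
    (hw : ContDiff ℝ (⊤ : ℕ∞) w) (hρ : ContDiff ℝ (⊤ : ℕ∞) ρ) (hρpos : ∀ x, 0 < ρ x)
    (huper : ∀ x i, u (x + Pi.single i 1) = u x)
    (hlamper : ∀ x i, lam (x + Pi.single i 1) = lam x)
    (hwper : ∀ x i, w (x + Pi.single i 1) = w x)
    (hρper : ∀ x i, ρ (x + Pi.single i 1) = ρ x)
    (hconstraint : ∀ x i,
      fderiv ℝ (fun y => ρ y * w y) x (Pi.single i 1) = ρ x * lam x i) :
    (∫ x in Set.univ.pi fun _ : Fin d => Set.Icc (0:ℝ) 1,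
      (- ρ x * ∑ i, ∑ j, lam x i * u x j * fderiv ℝ lam x (Pi.single j 1) i
        + ρ x * ∑ i, ∑ j, lam x i * lam x j * fderiv ℝ u x (Pi.single j 1) i
        + ρ x * w x * ∑ i, ∑ j,
            fderiv ℝ lam x (Pi.single j 1) i * fderiv ℝ u x (Pi.single i 1) j
        + ∑ i, ∑ j, fderiv ℝ lam x (Pi.single j 1) i *
            fderiv ℝ (fun y => ρ y * w y) x (Pi.single i 1) * u x j
        - ∑ i, ∑ j, fderiv ℝ u x (Pi.single j 1) i *
            fderiv ℝ (fun y => ρ y * w y) x (Pi.single i 1) * lam x j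
        - ρ x * w x * ∑ i, ∑ j,
            fderiv ℝ u x (Pi.single j 1) i * fderiv ℝ lam x (Pi.single i 1) j)) = 0 := by

  have h : ∀ x : Fin d → ℝ,
      (- ρ x * ∑ i, ∑ j, lam x i * u x j * fderiv ℝ lam x (Pi.single j 1) i
        + ρ x * ∑ i, ∑ j, lam x i * lam x j * fderiv ℝ u x (Pi.single j 1) i
        + ρ x * w x * ∑ i, ∑ j,
            fderiv ℝ lam x (Pi.single j 1) i * fderiv ℝ u x (Pi.single i 1) j
        + ∑ i, ∑ j, fderiv ℝ lam x (Pi.single j 1) i *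
            fderiv ℝ (fun y => ρ y * w y) x (Pi.single i 1) * u x j
        - ∑ i, ∑ j, fderiv ℝ u x (Pi.single j 1) i *
            fderiv ℝ (fun y => ρ y * w y) x (Pi.single i 1) * lam x j
        - ρ x * w x * ∑ i, ∑ j,
            fderiv ℝ u x (Pi.single j 1) i * fderiv ℝ lam x (Pi.single i 1) j) = 0 := by
    intro x
    simp only [hconstraint]
    have e1 : ∑ i, ∑ j, fderiv ℝ lam x (Pi.single j 1) i * (ρ x * lam x i) * u x j
        = ρ x * ∑ i, ∑ j, lam x i * u x j * fderiv ℝ lam x (Pi.single j 1) i := by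
      rw [Finset.mul_sum]
      exact Finset.sum_congr rfl fun i _ => by
        rw [Finset.mul_sum]; exact Finset.sum_congr rfl fun j _ => by ring
    have e2 : ∑ i, ∑ j, fderiv ℝ u x (Pi.single j 1) i * (ρ x * lam x i) * lam x j
        = ρ x * ∑ i, ∑ j, lam x i * lam x j * fderiv ℝ u x (Pi.single j 1) i := by
      rw [Finset.mul_sum]
      exact Finset.sum_congr rfl fun i _ => by
        rw [Finset.mul_sum]; exact Finset.sum_congr rfl fun j _ => by ring
    have e3 : ∑ i, ∑ j, fderiv ℝ u x (Pi.single j 1) i * fderiv ℝ lam x (Pi.single i 1) j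
        = ∑ i, ∑ j, fderiv ℝ lam x (Pi.single j 1) i * fderiv ℝ u x (Pi.single i 1) j := by
      rw [Finset.sum_comm]
      exact Finset.sum_congr rfl fun i _ => Finset.sum_congr rfl fun j _ => by ring
    rw [e1, e2, e3]; ring
  simp only [h]
  simp
end
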